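/- arXiv:2009.10909 — 6 statements merged into one kernel-verified Lean document; each statement's English description precedes it below -/
import Mathlib

section
/- Let Θ = (θ_0, θ_1) ∈ ℝ² and let V = (V_0, V_1) be a nonzero finite-dimensional Θ-stable representation of the quiver with relations (Q,I). Then at least one of the following holds: (1) dim V_0 = dim V_1 = 1; (2) a_1 = a_2 = 0; (3) b_1 = b_2 = 0. (Trichotomy lemma for stable representations of the CY4 quiver of the local resolved conifold O_{P1}(−1,−1,0).) -/
open Module

variable {V₀ V₁ : Type*} [AddCommGroup V₀] [Module ℂ V₀] [AddCommGroup V₁] [Module ℂ V₁]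

/-- `(W₀, W₁)` is a subrepresentation of the representation of the quiver `(Q, I)`
given by the data `(a₁, a₂, b₁, b₂, c, d)`. -/
def IsSubrep (a₁ a₂ : V₀ →ₗ[ℂ] V₁) (b₁ b₂ : V₁ →ₗ[ℂ] V₀)
    (c : V₀ →ₗ[ℂ] V₀) (d : V₁ →ₗ[ℂ] V₁)
    (W₀ : Submodule ℂ V₀) (W₁ : Submodule ℂ V₁) : Prop :=
  (∀ x ∈ W₀, a₁ x ∈ W₁) ∧ (∀ x ∈ W₀, a₂ x ∈ W₁) ∧
    (∀ y ∈ W₁, b₁ y ∈ W₀) ∧ (∀ y ∈ W₁, b₂ y ∈ W₀) ∧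
    (∀ x ∈ W₀, c x ∈ W₀) ∧ (∀ y ∈ W₁, d y ∈ W₁)

/-- The relations `a₂ bᵢ a₁ = a₁ bᵢ a₂`, `b₂ aᵢ b₁ = b₁ aᵢ b₂`, `d aᵢ = aᵢ c`,
`c bᵢ = bᵢ d` (i = 1, 2) of the quiver `(Q, I)`. -/
def SatisfiesRelations (a₁ a₂ : V₀ →ₗ[ℂ] V₁) (b₁ b₂ : V₁ →ₗ[ℂ] V₀)
    (c : V₀ →ₗ[ℂ] V₀) (d : V₁ →ₗ[ℂ] V₁) : Prop :=
  a₂ ∘ₗ b₁ ∘ₗ a₁ = a₁ ∘ₗ b₁ ∘ₗ a₂ ∧ a₂ ∘ₗ b₂ ∘ₗ a₁ = a₁ ∘ₗ b₂ ∘ₗ a₂ ∧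
    b₂ ∘ₗ a₁ ∘ₗ b₁ = b₁ ∘ₗ a₁ ∘ₗ b₂ ∧ b₂ ∘ₗ a₂ ∘ₗ b₁ = b₁ ∘ₗ a₂ ∘ₗ b₂ ∧
    d ∘ₗ a₁ = a₁ ∘ₗ c ∧ d ∘ₗ a₂ = a₂ ∘ₗ c ∧
    c ∘ₗ b₁ = b₁ ∘ₗ d ∧ c ∘ₗ b₂ = b₂ ∘ₗ d

/-- The slope `μ_Θ` of a pair of dimensions `(n₀, n₁)` with respect to `Θ = (θ₀, θ₁)`. -/
noncomputable def slopeMu (θ₀ θ₁ : ℝ) (n₀ n₁ : ℕ) : ℝ :=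
  (θ₀ * (n₀ : ℝ) + θ₁ * (n₁ : ℝ)) / ((n₀ : ℝ) + (n₁ : ℝ))

/-- `Θ`-stability of the (nonzero) representation `(V₀, V₁)`: every subrepresentation
`(W₀, W₁)` with `0 ≠ (W₀, W₁) ⊊ (V₀, V₁)` has strictly smaller slope. -/
def IsThetaStable [FiniteDimensional ℂ V₀] [FiniteDimensional ℂ V₁]
    (θ₀ θ₁ : ℝ) (a₁ a₂ : V₀ →ₗ[ℂ] V₁) (b₁ b₂ : V₁ →ₗ[ℂ] V₀)
    (c : V₀ →ₗ[ℂ] V₀) (d : V₁ →ₗ[ℂ] V₁) : Prop :=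
  ∀ W₀ : Submodule ℂ V₀, ∀ W₁ : Submodule ℂ V₁,
    IsSubrep a₁ a₂ b₁ b₂ c d W₀ W₁ →
    ¬(W₀ = ⊥ ∧ W₁ = ⊥) → ¬(W₀ = ⊤ ∧ W₁ = ⊤) →
    slopeMu θ₀ θ₁ (finrank ℂ W₀) (finrank ℂ W₁) <
      slopeMu θ₀ θ₁ (finrank ℂ V₀) (finrank ℂ V₁)

/-!
Stability gives Schur's lemma: an endomorphism `(f₀, f₁)` of `V` with nonzero kernel vanishes,
since otherwise its kernel and image are proper nonzero subrepresentations of slope `< μ_Θ(V)`,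
while by rank–nullity `μ_Θ(V)` is a weighted average of their slopes. Applied to `(f₀, f₁) - λ`
for an eigenvalue `λ`, this shows that every endomorphism is a scalar. The relations make
`(bⱼ aᵢ, aᵢ bⱼ)` an endomorphism, so `bⱼ aᵢ = λᵢⱼ` and `aᵢ bⱼ = λᵢⱼ` for scalars `λᵢⱼ`.

If some `λᵢⱼ ≠ 0`, then `aᵢ` is an isomorphism, so `dim V₀ = dim V₁`, and each
`aₖ = λᵢⱼ⁻¹ aₖ bⱼ aᵢ` is proportional to `aᵢ`. Hence an eigenvector `v` of `c` spans a
subrepresentation `(ℂ v, ℂ aᵢ v)` with the slope of `V`, which must be all of `V`.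
If all `λᵢⱼ` vanish and `a ≠ 0`, then `(0, ker b₁ ∩ ker b₂)` is a proper nonzero
subrepresentation, so `θ₁ < μ_Θ(V)`; symmetrically `b ≠ 0` gives `θ₀ < μ_Θ(V)`, which is
impossible as `μ_Θ(V) ≤ max θ₀ θ₁`.
-/

section Slope

variable (θ₀ θ₁ : ℝ)

lemma slopeMu_comm (n₀ n₁ : ℕ) : slopeMu θ₀ θ₁ n₀ n₁ = slopeMu θ₁ θ₀ n₁ n₀ := by
  rw [slopeMu, slopeMu, add_comm (θ₁ * _), add_comm (n₁ : ℝ)]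

lemma slopeMu_zero_left {n : ℕ} (hn : n ≠ 0) : slopeMu θ₀ θ₁ 0 n = θ₁ := by
  have : (n : ℝ) ≠ 0 := Nat.cast_ne_zero.mpr hn
  simp [slopeMu, this]

lemma slopeMu_self {n : ℕ} (hn : n ≠ 0) : slopeMu θ₀ θ₁ n n = slopeMu θ₀ θ₁ 1 1 := by
  have : (n : ℝ) ≠ 0 := Nat.cast_ne_zero.mpr hn
  simp only [slopeMu, Nat.cast_one]
  field_simp

lemma slopeMu_le_max {n₀ n₁ : ℕ} (hn : 0 < n₀ + n₁) : slopeMu θ₀ θ₁ n₀ n₁ ≤ max θ₀ θ₁ := by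
  have hpos : (0 : ℝ) < n₀ + n₁ := by exact_mod_cast hn
  rw [slopeMu, div_le_iff₀ hpos, mul_add]
  gcongr
  exacts [le_max_left _ _, le_max_right _ _]

lemma slopeMu_add_le_max {k₀ k₁ r₀ r₁ : ℕ} (hk : 0 < k₀ + k₁) (hr : 0 < r₀ + r₁) :
    slopeMu θ₀ θ₁ (k₀ + r₀) (k₁ + r₁) ≤ max (slopeMu θ₀ θ₁ k₀ k₁) (slopeMu θ₀ θ₁ r₀ r₁) := by
  set m := max (slopeMu θ₀ θ₁ k₀ k₁) (slopeMu θ₀ θ₁ r₀ r₁)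
  have hK : (0 : ℝ) < k₀ + k₁ := by exact_mod_cast hk
  have hR : (0 : ℝ) < r₀ + r₁ := by exact_mod_cast hr
  have hk' : θ₀ * k₀ + θ₁ * k₁ ≤ m * (k₀ + k₁) := (div_le_iff₀ hK).mp (le_max_left _ _)
  have hr' : θ₀ * r₀ + θ₁ * r₁ ≤ m * (r₀ + r₁) := (div_le_iff₀ hR).mp (le_max_right _ _)
  rw [slopeMu, div_le_iff₀ (by push_cast; linarith)]
  push_cast
  linarith

end Slope

section CommSquare

variable {M N M' N' : Type*} [AddCommGroup M] [Module ℂ M] [AddCommGroup N] [Module ℂ N]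
  [AddCommGroup M'] [Module ℂ M'] [AddCommGroup N'] [Module ℂ N']
  {f : M →ₗ[ℂ] N} {g : M →ₗ[ℂ] M'} {f' : M' →ₗ[ℂ] N'} {g' : N →ₗ[ℂ] N'}

lemma apply_mem_ker_of_comp_eq_comp (h : f' ∘ₗ g = g' ∘ₗ f) {x : M} (hx : x ∈ LinearMap.ker f) :
    g x ∈ LinearMap.ker f' := by
  rw [LinearMap.mem_ker] at hx ⊢
  rw [← LinearMap.comp_apply, h, LinearMap.comp_apply, hx, map_zero]

lemma apply_mem_range_of_comp_eq_comp (h : f' ∘ₗ g = g' ∘ₗ f) {y : N}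
    (hy : y ∈ LinearMap.range f) : g' y ∈ LinearMap.range f' := by
  obtain ⟨x, rfl⟩ := hy
  exact ⟨g x, by rw [← LinearMap.comp_apply, h, LinearMap.comp_apply]⟩

end CommSquare

lemma forall_mem_span_singleton_apply_mem {M N : Type*} [AddCommGroup M] [Module ℂ M]
    [AddCommGroup N] [Module ℂ N] (f : M →ₗ[ℂ] N) {v : M} {W : Submodule ℂ N} (h : f v ∈ W) :
    ∀ x ∈ ℂ ∙ v, f x ∈ W :=
  (Submodule.span_singleton_le_iff_mem v (W.comap f)).mpr h

lemma comp_sub_smul_id_eq {M N : Type*} [AddCommGroup M] [Module ℂ M] [AddCommGroup N]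
    [Module ℂ N] {g : M →ₗ[ℂ] N} {f : M →ₗ[ℂ] M} {f' : N →ₗ[ℂ] N} (h : g ∘ₗ f = f' ∘ₗ g) (t : ℂ) :
    g ∘ₗ (f - t • LinearMap.id) = (f' - t • LinearMap.id) ∘ₗ g := by
  rw [LinearMap.comp_sub, LinearMap.sub_comp, LinearMap.comp_smul, LinearMap.smul_comp,
    LinearMap.comp_id, LinearMap.id_comp, h]

lemma finrank_add_finrank_pos {M N : Type*} [AddCommGroup M] [Module ℂ M] [AddCommGroup N]
    [Module ℂ N] [FiniteDimensional ℂ M] [FiniteDimensional ℂ N] {W : Submodule ℂ M}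
    {W' : Submodule ℂ N} (h : ¬(W = ⊥ ∧ W' = ⊥)) : 0 < finrank ℂ W + finrank ℂ W' := by
  rwa [Nat.pos_iff_ne_zero, Ne, Nat.add_eq_zero_iff, Submodule.finrank_eq_zero,
    Submodule.finrank_eq_zero]

def IsEndo (a₁ a₂ : V₀ →ₗ[ℂ] V₁) (b₁ b₂ : V₁ →ₗ[ℂ] V₀)
    (c : V₀ →ₗ[ℂ] V₀) (d : V₁ →ₗ[ℂ] V₁)
    (f₀ : V₀ →ₗ[ℂ] V₀) (f₁ : V₁ →ₗ[ℂ] V₁) : Prop :=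
  a₁ ∘ₗ f₀ = f₁ ∘ₗ a₁ ∧ a₂ ∘ₗ f₀ = f₁ ∘ₗ a₂ ∧
    b₁ ∘ₗ f₁ = f₀ ∘ₗ b₁ ∧ b₂ ∘ₗ f₁ = f₀ ∘ₗ b₂ ∧
    c ∘ₗ f₀ = f₀ ∘ₗ c ∧ d ∘ₗ f₁ = f₁ ∘ₗ d

section Representation

variable {θ₀ θ₁ : ℝ} {a₁ a₂ : V₀ →ₗ[ℂ] V₁} {b₁ b₂ : V₁ →ₗ[ℂ] V₀}
  {c : V₀ →ₗ[ℂ] V₀} {d : V₁ →ₗ[ℂ] V₁}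

lemma IsSubrep.swap {W₀ : Submodule ℂ V₀} {W₁ : Submodule ℂ V₁}
    (h : IsSubrep a₁ a₂ b₁ b₂ c d W₀ W₁) : IsSubrep b₁ b₂ a₁ a₂ d c W₁ W₀ :=
  let ⟨ha₁, ha₂, hb₁, hb₂, hc, hd⟩ := h
  ⟨hb₁, hb₂, ha₁, ha₂, hd, hc⟩

section Endo

variable {f₀ : V₀ →ₗ[ℂ] V₀} {f₁ : V₁ →ₗ[ℂ] V₁}

lemma IsEndo.isSubrep_ker (h : IsEndo a₁ a₂ b₁ b₂ c d f₀ f₁) :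
    IsSubrep a₁ a₂ b₁ b₂ c d (LinearMap.ker f₀) (LinearMap.ker f₁) :=
  let ⟨h₁, h₂, h₃, h₄, h₅, h₆⟩ := h
  ⟨fun _ => apply_mem_ker_of_comp_eq_comp h₁.symm, fun _ => apply_mem_ker_of_comp_eq_comp h₂.symm,
    fun _ => apply_mem_ker_of_comp_eq_comp h₃.symm, fun _ => apply_mem_ker_of_comp_eq_comp h₄.symm,
    fun _ => apply_mem_ker_of_comp_eq_comp h₅.symm, fun _ => apply_mem_ker_of_comp_eq_comp h₆.symm⟩

lemma IsEndo.isSubrep_range (h : IsEndo a₁ a₂ b₁ b₂ c d f₀ f₁) :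
    IsSubrep a₁ a₂ b₁ b₂ c d (LinearMap.range f₀) (LinearMap.range f₁) :=
  let ⟨h₁, h₂, h₃, h₄, h₅, h₆⟩ := h
  ⟨fun _ => apply_mem_range_of_comp_eq_comp h₁.symm,
    fun _ => apply_mem_range_of_comp_eq_comp h₂.symm,
    fun _ => apply_mem_range_of_comp_eq_comp h₃.symm,
    fun _ => apply_mem_range_of_comp_eq_comp h₄.symm,
    fun _ => apply_mem_range_of_comp_eq_comp h₅.symm,
    fun _ => apply_mem_range_of_comp_eq_comp h₆.symm⟩

lemma IsEndo.sub_smul_id (h : IsEndo a₁ a₂ b₁ b₂ c d f₀ f₁) (t : ℂ) :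
    IsEndo a₁ a₂ b₁ b₂ c d (f₀ - t • LinearMap.id) (f₁ - t • LinearMap.id) :=
  let ⟨h₁, h₂, h₃, h₄, h₅, h₆⟩ := h
  ⟨comp_sub_smul_id_eq h₁ t, comp_sub_smul_id_eq h₂ t, comp_sub_smul_id_eq h₃ t,
    comp_sub_smul_id_eq h₄ t, comp_sub_smul_id_eq h₅ t, comp_sub_smul_id_eq h₆ t⟩

end Endo

lemma isEndo_comp_of_comm {a : V₀ →ₗ[ℂ] V₁} {b : V₁ →ₗ[ℂ] V₀}
    (h₁ : a₁ ∘ₗ b ∘ₗ a = a ∘ₗ b ∘ₗ a₁) (h₂ : a₂ ∘ₗ b ∘ₗ a = a ∘ₗ b ∘ₗ a₂)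
    (h₃ : b₁ ∘ₗ a ∘ₗ b = b ∘ₗ a ∘ₗ b₁) (h₄ : b₂ ∘ₗ a ∘ₗ b = b ∘ₗ a ∘ₗ b₂)
    (hcb : c ∘ₗ b = b ∘ₗ d) (hda : d ∘ₗ a = a ∘ₗ c) :
    IsEndo a₁ a₂ b₁ b₂ c d (b ∘ₗ a) (a ∘ₗ b) := by
  refine ⟨h₁, h₂, h₃, h₄, ?_, ?_⟩
  · rw [← LinearMap.comp_assoc, hcb, LinearMap.comp_assoc, hda, LinearMap.comp_assoc]
  · rw [← LinearMap.comp_assoc, hda, LinearMap.comp_assoc, hcb, LinearMap.comp_assoc]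

lemma SatisfiesRelations.d_comp_eq (hrel : SatisfiesRelations a₁ a₂ b₁ b₂ c d)
    {a : V₀ →ₗ[ℂ] V₁} (ha : a ∈ ({a₁, a₂} : Set (V₀ →ₗ[ℂ] V₁))) : d ∘ₗ a = a ∘ₗ c := by
  rcases ha with rfl | rfl
  exacts [hrel.2.2.2.2.1, hrel.2.2.2.2.2.1]

lemma SatisfiesRelations.c_comp_eq (hrel : SatisfiesRelations a₁ a₂ b₁ b₂ c d)
    {b : V₁ →ₗ[ℂ] V₀} (hb : b ∈ ({b₁, b₂} : Set (V₁ →ₗ[ℂ] V₀))) : c ∘ₗ b = b ∘ₗ d := by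
  rcases hb with rfl | rfl
  exacts [hrel.2.2.2.2.2.2.1, hrel.2.2.2.2.2.2.2]

lemma SatisfiesRelations.isEndo_comp (hrel : SatisfiesRelations a₁ a₂ b₁ b₂ c d)
    {a : V₀ →ₗ[ℂ] V₁} {b : V₁ →ₗ[ℂ] V₀} (ha : a ∈ ({a₁, a₂} : Set (V₀ →ₗ[ℂ] V₁)))
    (hb : b ∈ ({b₁, b₂} : Set (V₁ →ₗ[ℂ] V₀))) :
    IsEndo a₁ a₂ b₁ b₂ c d (b ∘ₗ a) (a ∘ₗ b) := by
  refine isEndo_comp_of_comm ?_ ?_ ?_ ?_ (hrel.c_comp_eq hb) (hrel.d_comp_eq ha) <;>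
  obtain ⟨r₁, r₂, r₃, r₄, -⟩ := hrel <;>
  rcases ha with rfl | rfl <;> rcases hb with rfl | rfl <;>
  first | rfl | assumption | exact Eq.symm ‹_›

lemma isSubrep_span_singleton {a : V₀ →ₗ[ℂ] V₁} {b : V₁ →ₗ[ℂ] V₀} {t s : ℂ} {v : V₀}
    (ht : t ≠ 0) (hba : b ∘ₗ a = t • LinearMap.id)
    (hA : ∀ a' ∈ ({a₁, a₂} : Set (V₀ →ₗ[ℂ] V₁)), ∃ r : ℂ, a' ∘ₗ b = r • LinearMap.id)
    (hB : ∀ b' ∈ ({b₁, b₂} : Set (V₁ →ₗ[ℂ] V₀)), ∃ r : ℂ, b' ∘ₗ a = r • LinearMap.id)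
    (hda : d ∘ₗ a = a ∘ₗ c) (hv : c v = s • v) :
    IsSubrep a₁ a₂ b₁ b₂ c d (ℂ ∙ v) (ℂ ∙ a v) := by
  have hAv : ∀ a' ∈ ({a₁, a₂} : Set (V₀ →ₗ[ℂ] V₁)), a' v ∈ ℂ ∙ a v := by
    intro a' ha'
    obtain ⟨r, hr⟩ := hA a' ha'
    have hbav : b (a v) = t • v := by simpa using LinearMap.congr_fun hba v
    have hr' : a' (b (a v)) = r • a v := by simpa using LinearMap.congr_fun hr (a v)
    rw [← Submodule.smul_mem_iff _ ht, ← map_smul, ← hbav, hr']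
    exact Submodule.smul_mem _ r (Submodule.mem_span_singleton_self _)
  have hBv : ∀ b' ∈ ({b₁, b₂} : Set (V₁ →ₗ[ℂ] V₀)), b' (a v) ∈ ℂ ∙ v := by
    intro b' hb'
    obtain ⟨r, hr⟩ := hB b' hb'
    rw [show b' (a v) = r • v by simpa using LinearMap.congr_fun hr v]
    exact Submodule.smul_mem _ r (Submodule.mem_span_singleton_self _)
  have hcv : c v ∈ ℂ ∙ v := hv ▸ Submodule.smul_mem _ s (Submodule.mem_span_singleton_self _)
  have hdav : d (a v) ∈ ℂ ∙ a v := by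
    rw [← LinearMap.comp_apply, hda, LinearMap.comp_apply, hv, map_smul]
    exact Submodule.smul_mem _ s (Submodule.mem_span_singleton_self _)
  exact ⟨forall_mem_span_singleton_apply_mem _ (hAv a₁ (by simp)),
    forall_mem_span_singleton_apply_mem _ (hAv a₂ (by simp)),
    forall_mem_span_singleton_apply_mem _ (hBv b₁ (by simp)),
    forall_mem_span_singleton_apply_mem _ (hBv b₂ (by simp)),
    forall_mem_span_singleton_apply_mem _ hcv, forall_mem_span_singleton_apply_mem _ hdav⟩

section Stable

variable [FiniteDimensional ℂ V₀] [FiniteDimensional ℂ V₁]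

lemma IsThetaStable.swap (h : IsThetaStable θ₀ θ₁ a₁ a₂ b₁ b₂ c d) :
    IsThetaStable θ₁ θ₀ b₁ b₂ a₁ a₂ d c := by
  intro W₁ W₀ hsub hbot htop
  rw [slopeMu_comm θ₁ θ₀ (finrank ℂ W₁), slopeMu_comm θ₁ θ₀ (finrank ℂ V₁)]
  exact h W₀ W₁ hsub.swap (fun ⟨h₀, h₁⟩ => hbot ⟨h₁, h₀⟩) (fun ⟨h₀, h₁⟩ => htop ⟨h₁, h₀⟩)

lemma IsThetaStable.eq_top_of_slopeMu_le (h : IsThetaStable θ₀ θ₁ a₁ a₂ b₁ b₂ c d)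
    {W₀ : Submodule ℂ V₀} {W₁ : Submodule ℂ V₁} (hsub : IsSubrep a₁ a₂ b₁ b₂ c d W₀ W₁)
    (hbot : ¬(W₀ = ⊥ ∧ W₁ = ⊥))
    (hle : slopeMu θ₀ θ₁ (finrank ℂ V₀) (finrank ℂ V₁) ≤
      slopeMu θ₀ θ₁ (finrank ℂ W₀) (finrank ℂ W₁)) :
    W₀ = ⊤ ∧ W₁ = ⊤ := by
  by_contra htop
  exact (h W₀ W₁ hsub hbot htop).not_ge hle

lemma IsThetaStable.isEndo_eq_zero (h : IsThetaStable θ₀ θ₁ a₁ a₂ b₁ b₂ c d)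
    {f₀ : V₀ →ₗ[ℂ] V₀} {f₁ : V₁ →ₗ[ℂ] V₁} (hend : IsEndo a₁ a₂ b₁ b₂ c d f₀ f₁)
    (hker : ¬(LinearMap.ker f₀ = ⊥ ∧ LinearMap.ker f₁ = ⊥)) : f₀ = 0 ∧ f₁ = 0 := by
  by_contra hf
  have hker_top : ¬(LinearMap.ker f₀ = ⊤ ∧ LinearMap.ker f₁ = ⊤) := by
    simpa only [LinearMap.ker_eq_top] using hf
  have hrange_bot : ¬(LinearMap.range f₀ = ⊥ ∧ LinearMap.range f₁ = ⊥) := by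
    simpa only [LinearMap.range_eq_bot] using hf
  have hrange_top : ¬(LinearMap.range f₀ = ⊤ ∧ LinearMap.range f₁ = ⊤) := by
    simpa only [← LinearMap.ker_eq_bot_iff_range_eq_top] using hker
  have hk := h _ _ hend.isSubrep_ker hker hker_top
  have hr := h _ _ hend.isSubrep_range hrange_bot hrange_top
  have hsum := slopeMu_add_le_max θ₀ θ₁ (finrank_add_finrank_pos hrange_bot)
    (finrank_add_finrank_pos hker)
  rw [LinearMap.finrank_range_add_finrank_ker, LinearMap.finrank_range_add_finrank_ker] at hsum
  exact hsum.not_gt (max_lt hr hk)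

lemma IsThetaStable.exists_eq_smul_id (h : IsThetaStable θ₀ θ₁ a₁ a₂ b₁ b₂ c d)
    (hne : 0 < finrank ℂ V₀ + finrank ℂ V₁)
    {f₀ : V₀ →ₗ[ℂ] V₀} {f₁ : V₁ →ₗ[ℂ] V₁} (hend : IsEndo a₁ a₂ b₁ b₂ c d f₀ f₁) :
    ∃ t : ℂ, f₀ = t • LinearMap.id ∧ f₁ = t • LinearMap.id := by
  have : Nontrivial (V₀ × V₁) :=
    (Module.finrank_pos_iff (R := ℂ)).mp (by rwa [Module.finrank_prod])
  obtain ⟨t, ht⟩ := Module.End.exists_eigenvalue (f₀.prodMap f₁)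
  obtain ⟨⟨v₀, v₁⟩, hv⟩ := ht.exists_hasEigenvector
  have hv₀ : v₀ ∈ LinearMap.ker (f₀ - t • LinearMap.id) := by
    simpa [sub_eq_zero] using congrArg Prod.fst hv.apply_eq_smul
  have hv₁ : v₁ ∈ LinearMap.ker (f₁ - t • LinearMap.id) := by
    simpa [sub_eq_zero] using congrArg Prod.snd hv.apply_eq_smul
  have hker : ¬(LinearMap.ker (f₀ - t • LinearMap.id) = ⊥ ∧
      LinearMap.ker (f₁ - t • LinearMap.id) = ⊥) := fun ⟨h₀, h₁⟩ =>
    hv.2 (Prod.ext (by simpa [h₀] using hv₀) (by simpa [h₁] using hv₁))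
  obtain ⟨h₀, h₁⟩ := h.isEndo_eq_zero (hend.sub_smul_id t) hker
  exact ⟨t, sub_eq_zero.mp h₀, sub_eq_zero.mp h₁⟩

lemma IsThetaStable.theta₁_lt_slopeMu (h : IsThetaStable θ₀ θ₁ a₁ a₂ b₁ b₂ c d)
    (hcb : ∀ b ∈ ({b₁, b₂} : Set (V₁ →ₗ[ℂ] V₀)), c ∘ₗ b = b ∘ₗ d)
    (hba : ∀ a ∈ ({a₁, a₂} : Set (V₀ →ₗ[ℂ] V₁)), ∀ b ∈ ({b₁, b₂} : Set (V₁ →ₗ[ℂ] V₀)),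
      b ∘ₗ a = 0)
    (ha : ¬(a₁ = 0 ∧ a₂ = 0)) :
    θ₁ < slopeMu θ₀ θ₁ (finrank ℂ V₀) (finrank ℂ V₁) := by
  set K := LinearMap.ker b₁ ⊓ LinearMap.ker b₂
  obtain ⟨a, ha, hne⟩ : ∃ a ∈ ({a₁, a₂} : Set (V₀ →ₗ[ℂ] V₁)), a ≠ 0 := by
    by_contra! hzero
    exact ha ⟨hzero a₁ (by simp), hzero a₂ (by simp)⟩
  obtain ⟨x, hx⟩ := DFunLike.ne_iff.mp hne
  have haxK : a x ∈ K := by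
    simp only [K, Submodule.mem_inf, LinearMap.mem_ker, ← LinearMap.comp_apply,
      hba a ha b₁ (by simp), hba a ha b₂ (by simp), LinearMap.zero_apply, and_self]
  have hsub : IsSubrep a₁ a₂ b₁ b₂ c d ⊥ K := by
    refine ⟨?_, ?_, fun y hy => hy.1, fun y hy => hy.2, ?_, fun y hy =>
      ⟨apply_mem_ker_of_comp_eq_comp (hcb b₁ (by simp)).symm hy.1,
        apply_mem_ker_of_comp_eq_comp (hcb b₂ (by simp)).symm hy.2⟩⟩ <;>
    · intro x hx
      rw [(Submodule.mem_bot ℂ).mp hx, map_zero]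
      exact zero_mem _
  have hK : K ≠ ⊥ := fun hK => hx ((Submodule.mem_bot ℂ).mp (hK ▸ haxK))
  have hx₀ : x ≠ 0 := by
    rintro rfl
    simp at hx
  have : Nontrivial V₀ := ⟨⟨x, 0, hx₀⟩⟩
  have hlt := h ⊥ K hsub (fun hbot => hK hbot.2) (fun htop => bot_ne_top htop.1)
  rwa [finrank_bot, slopeMu_zero_left _ _ (Submodule.finrank_eq_zero.not.mpr hK)] at hlt

lemma IsThetaStable.finrank_eq_one (h : IsThetaStable θ₀ θ₁ a₁ a₂ b₁ b₂ c d)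
    (hne : 0 < finrank ℂ V₀ + finrank ℂ V₁) {a : V₀ →ₗ[ℂ] V₁} {b : V₁ →ₗ[ℂ] V₀} {t : ℂ}
    (ht : t ≠ 0) (hba : b ∘ₗ a = t • LinearMap.id) (hab : a ∘ₗ b = t • LinearMap.id)
    (hA : ∀ a' ∈ ({a₁, a₂} : Set (V₀ →ₗ[ℂ] V₁)), ∃ r : ℂ, a' ∘ₗ b = r • LinearMap.id)
    (hB : ∀ b' ∈ ({b₁, b₂} : Set (V₁ →ₗ[ℂ] V₀)), ∃ r : ℂ, b' ∘ₗ a = r • LinearMap.id)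
    (hda : d ∘ₗ a = a ∘ₗ c) :
    finrank ℂ V₀ = 1 ∧ finrank ℂ V₁ = 1 := by
  let e : V₀ ≃ₗ[ℂ] V₁ := LinearEquiv.ofLinearMap a (t⁻¹ • b)
    (by rw [LinearMap.comp_smul, hab, smul_smul, inv_mul_cancel₀ ht, one_smul])
    (by rw [LinearMap.smul_comp, hba, smul_smul, inv_mul_cancel₀ ht, one_smul])
  have hdim : finrank ℂ V₀ = finrank ℂ V₁ := e.finrank_eq
  have : Nontrivial V₀ := (Module.finrank_pos_iff (R := ℂ)).mp (by omega)
  obtain ⟨s, hs⟩ := Module.End.exists_eigenvalue c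
  obtain ⟨v, hv⟩ := hs.exists_hasEigenvector
  have hav : a v ≠ 0 := e.map_ne_zero_iff.mpr hv.2
  have htop := h.eq_top_of_slopeMu_le
    (isSubrep_span_singleton ht hba hA hB hda hv.apply_eq_smul)
    (fun hbot => hv.2 (Submodule.span_singleton_eq_bot.mp hbot.1))
    (by rw [finrank_span_singleton hv.2, finrank_span_singleton hav, ← hdim,
      slopeMu_self _ _ (by omega)])
  rw [← hdim, and_self, ← finrank_top ℂ V₀, ← htop.1, finrank_span_singleton hv.2]

end Stable

end Representation

/-- Trichotomy lemma: a nonzero finite-dimensional `Θ`-stable representation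
of `(Q, I)` satisfies `dim V₀ = dim V₁ = 1`, or `a₁ = a₂ = 0`, or `b₁ = b₂ = 0`. -/
theorem trichotomy_of_theta_stable
    [FiniteDimensional ℂ V₀] [FiniteDimensional ℂ V₁]
    (θ₀ θ₁ : ℝ) (a₁ a₂ : V₀ →ₗ[ℂ] V₁) (b₁ b₂ : V₁ →ₗ[ℂ] V₀)
    (c : V₀ →ₗ[ℂ] V₀) (d : V₁ →ₗ[ℂ] V₁)
    (hrel : SatisfiesRelations a₁ a₂ b₁ b₂ c d)
    (hne : 0 < finrank ℂ V₀ + finrank ℂ V₁)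
    (hstab : IsThetaStable θ₀ θ₁ a₁ a₂ b₁ b₂ c d) :
    (finrank ℂ V₀ = 1 ∧ finrank ℂ V₁ = 1) ∨ (a₁ = 0 ∧ a₂ = 0) ∨ (b₁ = 0 ∧ b₂ = 0) := by
  have hscalar : ∀ a ∈ ({a₁, a₂} : Set (V₀ →ₗ[ℂ] V₁)), ∀ b ∈ ({b₁, b₂} : Set (V₁ →ₗ[ℂ] V₀)),
      ∃ t : ℂ, b ∘ₗ a = t • LinearMap.id ∧ a ∘ₗ b = t • LinearMap.id :=
    fun a ha b hb => hstab.exists_eq_smul_id hne (hrel.isEndo_comp ha hb)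
  by_cases hzero : ∀ a ∈ ({a₁, a₂} : Set (V₀ →ₗ[ℂ] V₁)),
      ∀ b ∈ ({b₁, b₂} : Set (V₁ →ₗ[ℂ] V₀)), b ∘ₗ a = 0 ∧ a ∘ₗ b = 0
  · right
    by_contra hab
    rw [not_or] at hab
    have h₁ := hstab.theta₁_lt_slopeMu (fun b hb => hrel.c_comp_eq hb)
      (fun a ha b hb => (hzero a ha b hb).1) hab.1
    have h₀ := hstab.swap.theta₁_lt_slopeMu (fun a ha => hrel.d_comp_eq ha)
      (fun b hb a ha => (hzero a ha b hb).2) hab.2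
    rw [← slopeMu_comm] at h₀
    exact (slopeMu_le_max θ₀ θ₁ hne).not_gt (max_lt h₀ h₁)
  · left
    obtain ⟨a, ha, b, hb, hnonzero⟩ : ∃ a ∈ ({a₁, a₂} : Set (V₀ →ₗ[ℂ] V₁)),
        ∃ b ∈ ({b₁, b₂} : Set (V₁ →ₗ[ℂ] V₀)), ¬(b ∘ₗ a = 0 ∧ a ∘ₗ b = 0) := by
      simpa only [not_forall, exists_prop] using hzero
    obtain ⟨t, hba, hab⟩ := hscalar a ha b hb
    have ht : t ≠ 0 := by
      rintro rfl
      exact hnonzero ⟨by rw [hba, zero_smul], by rw [hab, zero_smul]⟩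
    exact hstab.finrank_eq_one hne ht hba hab
      (fun a' ha' => (hscalar a' ha' b hb).imp fun _ => And.right)
      (fun b' hb' => (hscalar a ha b' hb').imp fun _ => And.left) (hrel.d_comp_eq ha)
end

section
/- Let Θ = (θ_0, θ_1) ∈ ℝ² and let V = (V_0, V_1) be a nonzero finite-dimensional Θ-stable representation of (Q,I) with θ_0·dim V_0 + θ_1·dim V_1 = 0. Then for every pair (i, j) ∈ {1,2}², either b_j ∘ a_i = 0 and a_i ∘ b_j = 0, or both a_i : V_0 → V_1 and b_j : V_1 → V_0 are bijective (in particular dim V_0 = dim V_1). (Key dichotomy step in the proof of the trichotomy lemma; it uses that (Ker(b_j a_i), Ker(a_i b_j)) and (Im(b_j a_i), Im(a_i b_j)) are subrepresentations of V.) -/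
open Module

variable {V₀ V₁ : Type*} [AddCommGroup V₀] [Module ℂ V₀] [AddCommGroup V₁] [Module ℂ V₁]

/-! For `a ∈ {a₁, a₂}` and `b ∈ {b₁, b₂}` the relations make `(b a, a b)` an endomorphism of the
representation, so its kernel and its image are subrepresentations. By rank–nullity their
dimension vectors add up to that of `V`, so their Θ-values add up to `Θ(V) = 0`, while stability
makes the Θ-value of a proper nonzero subrepresentation negative. Hence the kernel is `0`, and
`a`, `b` are injective maps between spaces of the same dimension, or it is all of `V`, and
`b a = 0`, `a b = 0`. -/

theorem LinearMap.bijective_and_finrank_eq_of_injective_comp {K E F : Type*} [DivisionRing K]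
    [AddCommGroup E] [Module K E] [AddCommGroup F] [Module K F]
    [FiniteDimensional K E] [FiniteDimensional K F] {a : E →ₗ[K] F} {b : F →ₗ[K] E}
    (hba : Function.Injective (b ∘ₗ a)) (hab : Function.Injective (a ∘ₗ b)) :
    Function.Bijective a ∧ Function.Bijective b ∧ finrank K E = finrank K F := by
  rw [LinearMap.coe_comp] at hba hab
  have ha := hba.of_comp
  have hb := hab.of_comp
  have hdim := le_antisymm (LinearMap.finrank_le_finrank_of_injective ha)
    (LinearMap.finrank_le_finrank_of_injective hb)
  exact ⟨⟨ha, (LinearMap.injective_iff_surjective_of_finrank_eq_finrank hdim).mp ha⟩,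
    ⟨hb, (LinearMap.injective_iff_surjective_of_finrank_eq_finrank hdim.symm).mp hb⟩, hdim⟩

section Intertwining

variable {R M N : Type*} [Semiring R] [AddCommMonoid M] [Module R M] [AddCommMonoid N]
  [Module R N] {φ : M →ₗ[R] N} {f : M →ₗ[R] M} {g : N →ₗ[R] N}

theorem LinearMap.mem_ker_of_comp_eq_comp (h : φ ∘ₗ f = g ∘ₗ φ) {x : M}
    (hx : x ∈ LinearMap.ker f) : φ x ∈ LinearMap.ker g := by
  rw [LinearMap.mem_ker] at hx ⊢
  rw [← LinearMap.comp_apply, ← h, LinearMap.comp_apply, hx, map_zero]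

theorem LinearMap.mem_range_of_comp_eq_comp (h : φ ∘ₗ f = g ∘ₗ φ) {y : M}
    (hy : y ∈ LinearMap.range f) : φ y ∈ LinearMap.range g := by
  obtain ⟨x, rfl⟩ := hy
  exact ⟨φ x, by rw [← LinearMap.comp_apply, ← h, LinearMap.comp_apply]⟩

end Intertwining

structure IsRepEndomorphism (a₁ a₂ : V₀ →ₗ[ℂ] V₁) (b₁ b₂ : V₁ →ₗ[ℂ] V₀)
    (c : V₀ →ₗ[ℂ] V₀) (d : V₁ →ₗ[ℂ] V₁) (f : V₀ →ₗ[ℂ] V₀) (g : V₁ →ₗ[ℂ] V₁) : Prop where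
  comp_a₁ : a₁ ∘ₗ f = g ∘ₗ a₁
  comp_a₂ : a₂ ∘ₗ f = g ∘ₗ a₂
  comp_b₁ : b₁ ∘ₗ g = f ∘ₗ b₁
  comp_b₂ : b₂ ∘ₗ g = f ∘ₗ b₂
  comp_c : c ∘ₗ f = f ∘ₗ c
  comp_d : d ∘ₗ g = g ∘ₗ d

namespace IsRepEndomorphism

variable {a₁ a₂ : V₀ →ₗ[ℂ] V₁} {b₁ b₂ : V₁ →ₗ[ℂ] V₀} {c : V₀ →ₗ[ℂ] V₀} {d : V₁ →ₗ[ℂ] V₁}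
  {f : V₀ →ₗ[ℂ] V₀} {g : V₁ →ₗ[ℂ] V₁}

theorem isSubrep_ker (h : IsRepEndomorphism a₁ a₂ b₁ b₂ c d f g) :
    IsSubrep a₁ a₂ b₁ b₂ c d (LinearMap.ker f) (LinearMap.ker g) :=
  ⟨fun _ => LinearMap.mem_ker_of_comp_eq_comp h.comp_a₁,
    fun _ => LinearMap.mem_ker_of_comp_eq_comp h.comp_a₂,
    fun _ => LinearMap.mem_ker_of_comp_eq_comp h.comp_b₁,
    fun _ => LinearMap.mem_ker_of_comp_eq_comp h.comp_b₂,
    fun _ => LinearMap.mem_ker_of_comp_eq_comp h.comp_c,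
    fun _ => LinearMap.mem_ker_of_comp_eq_comp h.comp_d⟩

theorem isSubrep_range (h : IsRepEndomorphism a₁ a₂ b₁ b₂ c d f g) :
    IsSubrep a₁ a₂ b₁ b₂ c d (LinearMap.range f) (LinearMap.range g) :=
  ⟨fun _ => LinearMap.mem_range_of_comp_eq_comp h.comp_a₁,
    fun _ => LinearMap.mem_range_of_comp_eq_comp h.comp_a₂,
    fun _ => LinearMap.mem_range_of_comp_eq_comp h.comp_b₁,
    fun _ => LinearMap.mem_range_of_comp_eq_comp h.comp_b₂,
    fun _ => LinearMap.mem_range_of_comp_eq_comp h.comp_c,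
    fun _ => LinearMap.mem_range_of_comp_eq_comp h.comp_d⟩

end IsRepEndomorphism

theorem SatisfiesRelations.isRepEndomorphism_comp {a₁ a₂ a : V₀ →ₗ[ℂ] V₁}
    {b₁ b₂ b : V₁ →ₗ[ℂ] V₀} {c : V₀ →ₗ[ℂ] V₀} {d : V₁ →ₗ[ℂ] V₁}
    (hrel : SatisfiesRelations a₁ a₂ b₁ b₂ c d) (ha : a = a₁ ∨ a = a₂) (hb : b = b₁ ∨ b = b₂) :
    IsRepEndomorphism a₁ a₂ b₁ b₂ c d (b ∘ₗ a) (a ∘ₗ b) := by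
  simp only [SatisfiesRelations, LinearMap.ext_iff, LinearMap.comp_apply] at hrel
  obtain ⟨r₁, r₂, r₃, r₄, r₅, r₆, r₇, r₈⟩ := hrel
  rcases ha with rfl | rfl <;> rcases hb with rfl | rfl <;> constructor <;> ext <;>
    simp only [LinearMap.comp_apply, r₁, r₂, r₃, r₄, r₅, r₆, r₇, r₈]

namespace IsThetaStable

variable [FiniteDimensional ℂ V₀] [FiniteDimensional ℂ V₁] {θ₀ θ₁ : ℝ}
  {a₁ a₂ : V₀ →ₗ[ℂ] V₁} {b₁ b₂ : V₁ →ₗ[ℂ] V₀} {c : V₀ →ₗ[ℂ] V₀} {d : V₁ →ₗ[ℂ] V₁}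

theorem theta_neg (hstab : IsThetaStable θ₀ θ₁ a₁ a₂ b₁ b₂ c d)
    (hzero : θ₀ * (finrank ℂ V₀ : ℝ) + θ₁ * (finrank ℂ V₁ : ℝ) = 0)
    {W₀ : Submodule ℂ V₀} {W₁ : Submodule ℂ V₁} (hW : IsSubrep a₁ a₂ b₁ b₂ c d W₀ W₁)
    (h_ne_bot : ¬(W₀ = ⊥ ∧ W₁ = ⊥)) (h_ne_top : ¬(W₀ = ⊤ ∧ W₁ = ⊤)) :
    θ₀ * (finrank ℂ W₀ : ℝ) + θ₁ * (finrank ℂ W₁ : ℝ) < 0 := by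
  have hslope := hstab W₀ W₁ hW h_ne_bot h_ne_top
  rw [slopeMu, slopeMu, hzero, zero_div] at hslope
  by_contra! hnonneg
  exact hslope.not_ge (div_nonneg hnonneg (by positivity))

theorem eq_bot_or_eq_top_of_finrank_add (hstab : IsThetaStable θ₀ θ₁ a₁ a₂ b₁ b₂ c d)
    (hzero : θ₀ * (finrank ℂ V₀ : ℝ) + θ₁ * (finrank ℂ V₁ : ℝ) = 0)
    {K₀ J₀ : Submodule ℂ V₀} {K₁ J₁ : Submodule ℂ V₁}
    (hK : IsSubrep a₁ a₂ b₁ b₂ c d K₀ K₁) (hJ : IsSubrep a₁ a₂ b₁ b₂ c d J₀ J₁)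
    (h₀ : finrank ℂ K₀ + finrank ℂ J₀ = finrank ℂ V₀)
    (h₁ : finrank ℂ K₁ + finrank ℂ J₁ = finrank ℂ V₁) :
    (K₀ = ⊥ ∧ K₁ = ⊥) ∨ (K₀ = ⊤ ∧ K₁ = ⊤) := by
  by_contra hK_ne
  rw [not_or] at hK_ne
  obtain ⟨hK_ne_bot, hK_ne_top⟩ := hK_ne
  have hJ_ne_bot : ¬(J₀ = ⊥ ∧ J₁ = ⊥) := by
    rintro ⟨rfl, rfl⟩
    rw [finrank_bot, add_zero] at h₀ h₁
    exact hK_ne_top ⟨Submodule.eq_top_of_finrank_eq h₀, Submodule.eq_top_of_finrank_eq h₁⟩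
  have hJ_ne_top : ¬(J₀ = ⊤ ∧ J₁ = ⊤) := by
    rintro ⟨rfl, rfl⟩
    rw [finrank_top, Nat.add_eq_right] at h₀ h₁
    exact hK_ne_bot ⟨Submodule.finrank_eq_zero.mp h₀, Submodule.finrank_eq_zero.mp h₁⟩
  have hK_neg := hstab.theta_neg hzero hK hK_ne_bot hK_ne_top
  have hJ_neg := hstab.theta_neg hzero hJ hJ_ne_bot hJ_ne_top
  have hsum : θ₀ * ((finrank ℂ K₀ : ℝ) + finrank ℂ J₀) + θ₁ * ((finrank ℂ K₁ : ℝ) + finrank ℂ J₁)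
      = 0 := by exact_mod_cast h₀ ▸ h₁ ▸ hzero
  linarith

end IsThetaStable

theorem dichotomy_of_theta_stable_general
    [FiniteDimensional ℂ V₀] [FiniteDimensional ℂ V₁]
    (θ₀ θ₁ : ℝ) (a₁ a₂ : V₀ →ₗ[ℂ] V₁) (b₁ b₂ : V₁ →ₗ[ℂ] V₀)
    (c : V₀ →ₗ[ℂ] V₀) (d : V₁ →ₗ[ℂ] V₁)
    (hrel : SatisfiesRelations a₁ a₂ b₁ b₂ c d)
    (hstab : IsThetaStable θ₀ θ₁ a₁ a₂ b₁ b₂ c d)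
    (hzero : θ₀ * (finrank ℂ V₀ : ℝ) + θ₁ * (finrank ℂ V₁ : ℝ) = 0) :
    ∀ a : V₀ →ₗ[ℂ] V₁, ∀ b : V₁ →ₗ[ℂ] V₀, (a = a₁ ∨ a = a₂) → (b = b₁ ∨ b = b₂) →
      (b ∘ₗ a = 0 ∧ a ∘ₗ b = 0) ∨
        (Function.Bijective a ∧ Function.Bijective b ∧ finrank ℂ V₀ = finrank ℂ V₁) := by
  intro a b ha hb
  have hend := hrel.isRepEndomorphism_comp ha hb
  rcases hstab.eq_bot_or_eq_top_of_finrank_add hzero hend.isSubrep_ker hend.isSubrep_range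
      ((add_comm _ _).trans (LinearMap.finrank_range_add_finrank_ker _))
      ((add_comm _ _).trans (LinearMap.finrank_range_add_finrank_ker _))
    with ⟨h_inj₀, h_inj₁⟩ | ⟨h_zero₀, h_zero₁⟩
  · exact Or.inr (LinearMap.bijective_and_finrank_eq_of_injective_comp
      (LinearMap.ker_eq_bot.mp h_inj₀) (LinearMap.ker_eq_bot.mp h_inj₁))
  · exact Or.inl ⟨LinearMap.ker_eq_top.mp h_zero₀, LinearMap.ker_eq_top.mp h_zero₁⟩

/-- Key dichotomy: for a nonzero `Θ`-stable representation with
`θ₀·dim V₀ + θ₁·dim V₁ = 0`, for each pair `(i, j) ∈ {1,2}²` either `bⱼ ∘ aᵢ = 0` and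
`aᵢ ∘ bⱼ = 0`, or both `aᵢ` and `bⱼ` are bijective (in particular `dim V₀ = dim V₁`). -/
theorem dichotomy_of_theta_stable
    [FiniteDimensional ℂ V₀] [FiniteDimensional ℂ V₁]
    (θ₀ θ₁ : ℝ) (a₁ a₂ : V₀ →ₗ[ℂ] V₁) (b₁ b₂ : V₁ →ₗ[ℂ] V₀)
    (c : V₀ →ₗ[ℂ] V₀) (d : V₁ →ₗ[ℂ] V₁)
    (hrel : SatisfiesRelations a₁ a₂ b₁ b₂ c d)
    (hne : 0 < finrank ℂ V₀ + finrank ℂ V₁)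
    (hstab : IsThetaStable θ₀ θ₁ a₁ a₂ b₁ b₂ c d)
    (hzero : θ₀ * (finrank ℂ V₀ : ℝ) + θ₁ * (finrank ℂ V₁ : ℝ) = 0) :
    ∀ a : V₀ →ₗ[ℂ] V₁, ∀ b : V₁ →ₗ[ℂ] V₀, (a = a₁ ∨ a = a₂) → (b = b₁ ∨ b = b₂) →
      (b ∘ₗ a = 0 ∧ a ∘ₗ b = 0) ∨
        (Function.Bijective a ∧ Function.Bijective b ∧ finrank ℂ V₀ = finrank ℂ V₁) :=
  dichotomy_of_theta_stable_general θ₀ θ₁ a₁ a₂ b₁ b₂ c d hrel hstab hzero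
end

section
/- Suppose θ_1 < 0 and let Ṽ = (V_0, V_1, ℂ) be a Θ-stable framed representation of (Q̃,I) such that ι : ℂ → V_0 is an isomorphism (so dim V_0 = 1). Then V_1 = Im(a_1) + Im(a_2); in particular dim V_1 ≤ 2. Moreover θ_0 + θ_1·dim V_1 < 0; in particular if dim V_1 = 2 then θ_0 + 2θ_1 < 0. (Case 2 of the classification of Θ-stable framed representations with dim V_0 = 1; uses that (V_0, Im a_1 + Im a_2, ℂ) is a framed subrepresentation by the relation d a_i = a_i c.) -/
open Module

variable {V₀ V₁ : Type*} [AddCommGroup V₀] [Module ℂ V₀] [AddCommGroup V₁] [Module ℂ V₁]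

/-- `Θ`-stability for a framed representation `(V₀, V₁, V_∞ = ℂ)` of `(Q̃, I)` with framing
map `ι : ℂ → V₀`:
(i) every framed subrepresentation `(W₀, W₁, 0)` with `(W₀, W₁) ≠ (0, 0)` satisfies
`Θ(W₀, W₁) < 0`, and
(ii) every framed subrepresentation `(W₀, W₁, ℂ)` with `(W₀, W₁) ≠ (V₀, V₁)` satisfies
`Θ(W₀, W₁) < Θ(V₀, V₁)`. -/
def IsFramedStable [FiniteDimensional ℂ V₀] [FiniteDimensional ℂ V₁]
    (θ₀ θ₁ : ℝ) (a₁ a₂ : V₀ →ₗ[ℂ] V₁) (b₁ b₂ : V₁ →ₗ[ℂ] V₀)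
    (c : V₀ →ₗ[ℂ] V₀) (d : V₁ →ₗ[ℂ] V₁) (ι : ℂ →ₗ[ℂ] V₀) : Prop :=
  (∀ W₀ : Submodule ℂ V₀, ∀ W₁ : Submodule ℂ V₁,
      IsSubrep a₁ a₂ b₁ b₂ c d W₀ W₁ → ¬(W₀ = ⊥ ∧ W₁ = ⊥) →
      θ₀ * (finrank ℂ W₀ : ℝ) + θ₁ * (finrank ℂ W₁ : ℝ) < 0) ∧
    (∀ W₀ : Submodule ℂ V₀, ∀ W₁ : Submodule ℂ V₁,
      IsSubrep a₁ a₂ b₁ b₂ c d W₀ W₁ → LinearMap.range ι ≤ W₀ →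
      ¬(W₀ = ⊤ ∧ W₁ = ⊤) →
      θ₀ * (finrank ℂ W₀ : ℝ) + θ₁ * (finrank ℂ W₁ : ℝ) <
        θ₀ * (finrank ℂ V₀ : ℝ) + θ₁ * (finrank ℂ V₁ : ℝ))

/-!
Because `d aᵢ = aᵢ c`, the pair `(V₀, Im a₁ + Im a₂)` is a subrepresentation, and it contains
the framing. Shrinking `V₁` raises `Θ` when `θ₁ < 0`, so condition (ii) of stability forces
`Im a₁ + Im a₂ = V₁`, whose dimension is at most `2 dim V₀ = 2`. Condition (i) applied to the
whole representation gives `θ₀ + θ₁ dim V₁ < 0`.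
-/

theorem isSubrep_top_top (a₁ a₂ : V₀ →ₗ[ℂ] V₁) (b₁ b₂ : V₁ →ₗ[ℂ] V₀)
    (c : V₀ →ₗ[ℂ] V₀) (d : V₁ →ₗ[ℂ] V₁) :
    IsSubrep a₁ a₂ b₁ b₂ c d ⊤ ⊤ := by
  simp [IsSubrep]

theorem isSubrep_top_sup_range {a₁ a₂ : V₀ →ₗ[ℂ] V₁} (b₁ b₂ : V₁ →ₗ[ℂ] V₀)
    {c : V₀ →ₗ[ℂ] V₀} {d : V₁ →ₗ[ℂ] V₁} (h₁ : d ∘ₗ a₁ = a₁ ∘ₗ c) (h₂ : d ∘ₗ a₂ = a₂ ∘ₗ c) :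
    IsSubrep a₁ a₂ b₁ b₂ c d ⊤ (LinearMap.range a₁ ⊔ LinearMap.range a₂) := by
  have hd : (LinearMap.range a₁ ⊔ LinearMap.range a₂).map d ≤
      LinearMap.range a₁ ⊔ LinearMap.range a₂ := by
    rw [Submodule.map_sup, ← LinearMap.range_comp, ← LinearMap.range_comp, h₁, h₂]
    exact sup_le_sup (LinearMap.range_comp_le_range _ _) (LinearMap.range_comp_le_range _ _)
  exact ⟨fun x _ => Submodule.mem_sup_left ⟨x, rfl⟩, fun x _ => Submodule.mem_sup_right ⟨x, rfl⟩,
    fun _ _ => Submodule.mem_top, fun _ _ => Submodule.mem_top, fun _ _ => Submodule.mem_top,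
    fun y hy => hd (Submodule.mem_map_of_mem hy)⟩

theorem finrank_sup_range_le [FiniteDimensional ℂ V₀] (a₁ a₂ : V₀ →ₗ[ℂ] V₁) :
    finrank ℂ ↥(LinearMap.range a₁ ⊔ LinearMap.range a₂) ≤ 2 * finrank ℂ V₀ := by
  rw [← LinearMap.range_coprod, two_mul, ← finrank_prod]
  exact LinearMap.finrank_range_le _

namespace IsFramedStable

variable [FiniteDimensional ℂ V₀] [FiniteDimensional ℂ V₁] {θ₀ θ₁ : ℝ}
  {a₁ a₂ : V₀ →ₗ[ℂ] V₁} {b₁ b₂ : V₁ →ₗ[ℂ] V₀} {c : V₀ →ₗ[ℂ] V₀} {d : V₁ →ₗ[ℂ] V₁}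
  {ι : ℂ →ₗ[ℂ] V₀}

theorem eq_top_of_isSubrep_top (hstab : IsFramedStable θ₀ θ₁ a₁ a₂ b₁ b₂ c d ι)
    (hθ₁ : θ₁ < 0) {W₁ : Submodule ℂ V₁} (hW : IsSubrep a₁ a₂ b₁ b₂ c d ⊤ W₁) : W₁ = ⊤ := by
  by_contra hne
  have hlt := hstab.2 ⊤ W₁ hW le_top fun h => hne h.2
  have hle : (finrank ℂ W₁ : ℝ) ≤ finrank ℂ V₁ := by exact_mod_cast Submodule.finrank_le W₁
  rw [finrank_top] at hlt
  linarith [mul_le_mul_of_nonpos_left hle hθ₁.le]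

theorem theta_total_neg (hstab : IsFramedStable θ₀ θ₁ a₁ a₂ b₁ b₂ c d ι) [Nontrivial V₀] :
    θ₀ * (finrank ℂ V₀ : ℝ) + θ₁ * (finrank ℂ V₁ : ℝ) < 0 := by
  simpa only [finrank_top] using
    hstab.1 ⊤ ⊤ (isSubrep_top_top a₁ a₂ b₁ b₂ c d) fun h => top_ne_bot h.1

end IsFramedStable

/-- if `θ₁ < 0` and `(V₀, V₁, ℂ)` is a `Θ`-stable framed representation with
`ι : ℂ → V₀` an isomorphism, then `V₁ = Im(a₁) + Im(a₂)`, so `dim V₁ ≤ 2`; moreover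
`θ₀ + θ₁·dim V₁ < 0` (in particular `dim V₁ = 2` forces `θ₀ + 2θ₁ < 0`). -/
theorem case_theta1_neg
    [FiniteDimensional ℂ V₀] [FiniteDimensional ℂ V₁]
    (θ₀ θ₁ : ℝ) (hθ₁ : θ₁ < 0)
    (a₁ a₂ : V₀ →ₗ[ℂ] V₁) (b₁ b₂ : V₁ →ₗ[ℂ] V₀)
    (c : V₀ →ₗ[ℂ] V₀) (d : V₁ →ₗ[ℂ] V₁) (ι : ℂ →ₗ[ℂ] V₀)
    (hrel : SatisfiesRelations a₁ a₂ b₁ b₂ c d)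
    (hι : Function.Bijective ι)
    (hstab : IsFramedStable θ₀ θ₁ a₁ a₂ b₁ b₂ c d ι) :
    LinearMap.range a₁ ⊔ LinearMap.range a₂ = (⊤ : Submodule ℂ V₁) ∧
      finrank ℂ V₁ ≤ 2 ∧
      θ₀ + θ₁ * (finrank ℂ V₁ : ℝ) < 0 := by
  have hV₀ : finrank ℂ V₀ = 1 :=
    (LinearEquiv.ofBijective ι hι).finrank_eq.symm.trans (finrank_self ℂ)
  have : Nontrivial V₀ := hι.injective.nontrivial
  have hspan : LinearMap.range a₁ ⊔ LinearMap.range a₂ = ⊤ :=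
    hstab.eq_top_of_isSubrep_top hθ₁
      (isSubrep_top_sup_range b₁ b₂ hrel.2.2.2.2.1 hrel.2.2.2.2.2.1)
  refine ⟨hspan, ?_, ?_⟩
  · calc finrank ℂ V₁ = finrank ℂ ↥(LinearMap.range a₁ ⊔ LinearMap.range a₂) := by
          rw [hspan, finrank_top]
      _ ≤ 2 * finrank ℂ V₀ := finrank_sup_range_le a₁ a₂
      _ = 2 := by rw [hV₀]
  · simpa [hV₀] using hstab.theta_total_neg
end

section
/- (Classification in chamber I.) Suppose θ_0 < 0, θ_1 > 0 and θ_0 + 2θ_1 > 0. Let Ṽ = (V_0, V_1, ℂ) be a framed representation of (Q̃,I) such that ι : ℂ → V_0 is an isomorphism and dim V_1 ≠ 1. Then Ṽ is Θ-stable if and only if V_1 = 0. -/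
/-!
Since `ι` is an isomorphism, `dim V₀ = 1`. Condition (i) applied to the whole representation
gives `θ₀ + θ₁ · dim V₁ < 0`, which `θ₀ + 2θ₁ > 0` rules out once `dim V₁ ≥ 2`. Conversely,
if `V₁ = 0` then a nonzero subrepresentation `(W₀, 0)` has `Θ = θ₀ · dim W₀ < 0`, and
condition (ii) is vacuous because a subrepresentation containing the image of the surjective
`ι` is everything.
-/

open Module

variable {V₀ V₁ : Type*} [AddCommGroup V₀] [Module ℂ V₀] [AddCommGroup V₁] [Module ℂ V₁]

theorem IsSubrep.top_top (a₁ a₂ : V₀ →ₗ[ℂ] V₁) (b₁ b₂ : V₁ →ₗ[ℂ] V₀)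
    (c : V₀ →ₗ[ℂ] V₀) (d : V₁ →ₗ[ℂ] V₁) :
    IsSubrep a₁ a₂ b₁ b₂ c d (⊤ : Submodule ℂ V₀) (⊤ : Submodule ℂ V₁) :=
  ⟨fun _ _ => trivial, fun _ _ => trivial, fun _ _ => trivial,
    fun _ _ => trivial, fun _ _ => trivial, fun _ _ => trivial⟩

theorem IsFramedStable.theta_neg [FiniteDimensional ℂ V₀] [FiniteDimensional ℂ V₁]
    [Nontrivial V₀] {θ₀ θ₁ : ℝ} {a₁ a₂ : V₀ →ₗ[ℂ] V₁} {b₁ b₂ : V₁ →ₗ[ℂ] V₀}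
    {c : V₀ →ₗ[ℂ] V₀} {d : V₁ →ₗ[ℂ] V₁} {ι : ℂ →ₗ[ℂ] V₀}
    (hs : IsFramedStable θ₀ θ₁ a₁ a₂ b₁ b₂ c d ι) :
    θ₀ * (finrank ℂ V₀ : ℝ) + θ₁ * (finrank ℂ V₁ : ℝ) < 0 := by
  have h := hs.1 ⊤ ⊤ (IsSubrep.top_top a₁ a₂ b₁ b₂ c d) fun h => top_ne_bot h.1
  rwa [finrank_top, finrank_top] at h

theorem isFramedStable_of_finrank_eq_zero [FiniteDimensional ℂ V₀] [FiniteDimensional ℂ V₁]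
    {θ₀ : ℝ} (θ₁ : ℝ) (hθ₀ : θ₀ < 0) (a₁ a₂ : V₀ →ₗ[ℂ] V₁) (b₁ b₂ : V₁ →ₗ[ℂ] V₀)
    (c : V₀ →ₗ[ℂ] V₀) (d : V₁ →ₗ[ℂ] V₁) {ι : ℂ →ₗ[ℂ] V₀} (hι : Function.Surjective ι)
    (h₁ : finrank ℂ V₁ = 0) :
    IsFramedStable θ₀ θ₁ a₁ a₂ b₁ b₂ c d ι := by
  have : Subsingleton V₁ := finrank_zero_iff.mp h₁
  constructor
  · intro W₀ W₁ _ hne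
    have hW₁ : W₁ = ⊥ := Subsingleton.elim _ _
    have hW₀ : 1 ≤ finrank ℂ W₀ :=
      Submodule.one_le_finrank_iff.mpr fun h => hne ⟨h, hW₁⟩
    rw [hW₁, finrank_bot, Nat.cast_zero, mul_zero, add_zero]
    exact mul_neg_of_neg_of_pos hθ₀ (Nat.cast_pos.mpr hW₀)
  · intro W₀ W₁ _ hrange hne
    exact absurd ⟨top_le_iff.mp (LinearMap.range_eq_top.mpr hι ▸ hrange),
      Subsingleton.elim _ _⟩ hne

theorem classification_chamber_I_general
    [FiniteDimensional ℂ V₀] [FiniteDimensional ℂ V₁]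
    (θ₀ θ₁ : ℝ) (hθ₀ : θ₀ < 0) (hc : 0 < θ₀ + 2 * θ₁)
    (a₁ a₂ : V₀ →ₗ[ℂ] V₁) (b₁ b₂ : V₁ →ₗ[ℂ] V₀)
    (c : V₀ →ₗ[ℂ] V₀) (d : V₁ →ₗ[ℂ] V₁) (ι : ℂ →ₗ[ℂ] V₀)
    (hι : Function.Bijective ι)
    (hd1 : finrank ℂ V₁ ≠ 1) :
    IsFramedStable θ₀ θ₁ a₁ a₂ b₁ b₂ c d ι ↔ finrank ℂ V₁ = 0 := by
  refine ⟨fun hs => ?_, isFramedStable_of_finrank_eq_zero θ₁ hθ₀ a₁ a₂ b₁ b₂ c d hι.2⟩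
  have h₀ : finrank ℂ V₀ = 1 := by
    rw [← (LinearEquiv.ofBijective ι hι).finrank_eq, finrank_self]
  have : Nontrivial V₀ := finrank_pos_iff (R := ℂ) |>.mp (by omega)
  have hneg := hs.theta_neg
  rw [h₀, Nat.cast_one, mul_one] at hneg
  by_contra hn
  have h₂ : (2 : ℝ) ≤ finrank ℂ V₁ := by exact_mod_cast (show 2 ≤ finrank ℂ V₁ by omega)
  nlinarith

/-- Classification in chamber I: if `θ₀ < 0`, `θ₁ > 0`, `θ₀ + 2θ₁ > 0`,
`ι : ℂ → V₀` is an isomorphism and `dim V₁ ≠ 1`, then the framed representation is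
`Θ`-stable iff `V₁ = 0`. -/
theorem classification_chamber_I
    [FiniteDimensional ℂ V₀] [FiniteDimensional ℂ V₁]
    (θ₀ θ₁ : ℝ) (hθ₀ : θ₀ < 0) (hθ₁ : 0 < θ₁) (hc : 0 < θ₀ + 2 * θ₁)
    (a₁ a₂ : V₀ →ₗ[ℂ] V₁) (b₁ b₂ : V₁ →ₗ[ℂ] V₀)
    (c : V₀ →ₗ[ℂ] V₀) (d : V₁ →ₗ[ℂ] V₁) (ι : ℂ →ₗ[ℂ] V₀)
    (hrel : SatisfiesRelations a₁ a₂ b₁ b₂ c d)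
    (hι : Function.Bijective ι)
    (hd1 : finrank ℂ V₁ ≠ 1) :
    IsFramedStable θ₀ θ₁ a₁ a₂ b₁ b₂ c d ι ↔ finrank ℂ V₁ = 0 :=
  classification_chamber_I_general θ₀ θ₁ hθ₀ hc a₁ a₂ b₁ b₂ c d ι hι hd1
end

section
/- (Classification in chamber II.) Suppose θ_0 < 0, θ_1 > 0 and θ_0 + 2θ_1 < 0. Let Ṽ = (V_0, V_1, ℂ) be a framed representation of (Q̃,I) such that ι : ℂ → V_0 is an isomorphism and dim V_1 ≠ 1. Then Ṽ is Θ-stable if and only if either V_1 = 0, or dim V_1 = 2 with a_1 = a_2 = 0 and Ker(b_1) ∩ Ker(b_2) = 0. -/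
/-!
Since `ι` is surjective, condition (ii) only concerns subrepresentations `(V₀, W₁)` with
`W₁ ⊊ V₁`, and holds because `θ₁ > 0`. For condition (i): a subrepresentation `(0, W₁)` has
`W₁ ⊆ Ker b₁ ∩ Ker b₂`, and this intersection is itself one by `c bᵢ = bᵢ d`, so as `θ₁ > 0`
(i) for these says exactly `Ker b₁ ∩ Ker b₂ = 0`. Then `(b₁, b₂) : V₁ → V₀²` is injective, so
`dim V₁ ≤ 2`, and as `dim V₀ = 1` the bound `θ₀ + 2θ₁ < 0` settles (i) for `W₀ ≠ 0`. Hence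
stability is equivalent to `Ker b₁ ∩ Ker b₂ = 0`. When `dim V₁ = 2`, `(b₁, b₂)` is an
isomorphism `V₁ ≅ V₀²`, and the relation `b₂ a b₁ = b₁ a b₂` forces `a = 0` for `a = a₁, a₂`.
-/

open Module

variable {V₀ V₁ : Type*} [AddCommGroup V₀] [Module ℂ V₀] [AddCommGroup V₁] [Module ℂ V₁]

open LinearMap

section LinearAlgebra

variable {K U V : Type*} [Field K] [AddCommGroup U] [Module K U] [AddCommGroup V] [Module K V]
  {b₁ b₂ : V →ₗ[K] U}

theorem injective_prod_of_ker_inf_eq_bot (hK : ker b₁ ⊓ ker b₂ = ⊥) :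
    Function.Injective (b₁.prod b₂) := by
  rwa [← ker_eq_bot, ker_prod]

theorem finrank_le_two_mul_of_ker_inf_eq_bot [FiniteDimensional K U] [FiniteDimensional K V]
    (hK : ker b₁ ⊓ ker b₂ = ⊥) : finrank K V ≤ 2 * finrank K U := by
  have := finrank_le_finrank_of_injective (injective_prod_of_ker_inf_eq_bot hK)
  rwa [finrank_prod, ← two_mul] at this

theorem eq_zero_of_comp_comp_eq_of_ker_inf_eq_bot [FiniteDimensional K U] [FiniteDimensional K V]
    (hK : ker b₁ ⊓ ker b₂ = ⊥) (hdim : finrank K V = 2 * finrank K U) {a : U →ₗ[K] V}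
    (h : b₂ ∘ₗ a ∘ₗ b₁ = b₁ ∘ₗ a ∘ₗ b₂) : a = 0 := by
  have hsurj : Function.Surjective (b₁.prod b₂) :=
    (injective_iff_surjective_of_finrank_eq_finrank (by rw [finrank_prod, hdim, two_mul])).mp
      (injective_prod_of_ker_inf_eq_bot hK)
  ext x
  -- with `(b₁ y₁, b₂ y₁) = (x, 0)` we get `b₂ (a x) = b₂ a b₁ y₁ = b₁ a b₂ y₁ = 0`; symmetrically
  -- `b₁ (a x) = 0`
  obtain ⟨y₁, hy₁⟩ := hsurj (x, 0)
  obtain ⟨y₂, hy₂⟩ := hsurj (0, x)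
  simp only [prod_apply, Function.prod, Prod.mk.injEq] at hy₁ hy₂
  have h₁ := congr($h y₁)
  have h₂ := congr($h y₂)
  simp only [comp_apply, hy₁, hy₂, map_zero] at h₁ h₂
  have hmem : a x ∈ ker b₁ ⊓ ker b₂ := ⟨h₂.symm, h₁⟩
  simpa [hK] using hmem

end LinearAlgebra

variable {a₁ a₂ : V₀ →ₗ[ℂ] V₁} {b₁ b₂ : V₁ →ₗ[ℂ] V₀} {c : V₀ →ₗ[ℂ] V₀} {d : V₁ →ₗ[ℂ] V₁}

theorem isSubrep_bot_ker_inf (hcb₁ : c ∘ₗ b₁ = b₁ ∘ₗ d) (hcb₂ : c ∘ₗ b₂ = b₂ ∘ₗ d) :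
    IsSubrep a₁ a₂ b₁ b₂ c d ⊥ (ker b₁ ⊓ ker b₂) := by
  refine ⟨fun x hx => ?_, fun x hx => ?_, fun y hy => hy.1, fun y hy => hy.2, fun x hx => ?_,
    fun y ⟨hy₁, hy₂⟩ => ⟨?_, ?_⟩⟩
  iterate 3 simp [(Submodule.mem_bot ℂ).mp hx]
  · simpa [mem_ker.mp hy₁, eq_comm] using congr($hcb₁ y)
  · simpa [mem_ker.mp hy₂, eq_comm] using congr($hcb₂ y)

theorem IsSubrep.le_ker_inf_of_bot {W₁ : Submodule ℂ V₁}
    (hW : IsSubrep a₁ a₂ b₁ b₂ c d ⊥ W₁) : W₁ ≤ ker b₁ ⊓ ker b₂ :=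
  fun y hy =>
    ⟨(Submodule.mem_bot ℂ).mp (hW.2.2.1 y hy), (Submodule.mem_bot ℂ).mp (hW.2.2.2.1 y hy)⟩

section FiniteDimensional

variable [FiniteDimensional ℂ V₀] [FiniteDimensional ℂ V₁] {θ₀ θ₁ : ℝ} {ι : ℂ →ₗ[ℂ] V₀}

theorem IsFramedStable.ker_inf_eq_bot (hst : IsFramedStable θ₀ θ₁ a₁ a₂ b₁ b₂ c d ι)
    (hθ₁ : 0 < θ₁) (hcb₁ : c ∘ₗ b₁ = b₁ ∘ₗ d) (hcb₂ : c ∘ₗ b₂ = b₂ ∘ₗ d) :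
    ker b₁ ⊓ ker b₂ = ⊥ := by
  by_contra hK
  have hneg := hst.1 ⊥ _ (isSubrep_bot_ker_inf hcb₁ hcb₂) (fun h => hK h.2)
  have hpos : 0 < finrank ℂ (ker b₁ ⊓ ker b₂ : Submodule ℂ V₁) :=
    Submodule.one_le_finrank_iff.mpr hK
  rw [finrank_bot, Nat.cast_zero, mul_zero, zero_add] at hneg
  exact hneg.not_gt (mul_pos hθ₁ (mod_cast hpos))

theorem isFramedStable_of_ker_inf_eq_bot (hθ₁ : 0 < θ₁) (hθ : θ₀ + 2 * θ₁ < 0)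
    (hι : Function.Surjective ι) (hV₀ : finrank ℂ V₀ = 1) (hK : ker b₁ ⊓ ker b₂ = ⊥) :
    IsFramedStable θ₀ θ₁ a₁ a₂ b₁ b₂ c d ι := by
  refine ⟨fun W₀ W₁ hW hne => ?_, fun W₀ W₁ _ hιW hne => ?_⟩
  · have hW₀ : W₀ ≠ ⊥ := by
      rintro rfl
      exact hne ⟨rfl, le_bot_iff.mp (hK ▸ hW.le_ker_inf_of_bot)⟩
    have hW₀rank : finrank ℂ W₀ = 1 :=
      le_antisymm (hV₀ ▸ Submodule.finrank_le W₀) (Submodule.one_le_finrank_iff.mpr hW₀)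
    have hW₁rank : (finrank ℂ W₁ : ℝ) ≤ 2 := by
      have := (Submodule.finrank_le W₁).trans (finrank_le_two_mul_of_ker_inf_eq_bot hK)
      rw [hV₀] at this
      exact_mod_cast this
    rw [hW₀rank, Nat.cast_one]
    nlinarith
  · have hW₀ : W₀ = ⊤ := top_le_iff.mp (range_eq_top.mpr hι ▸ hιW)
    have hW₁ : (finrank ℂ W₁ : ℝ) < finrank ℂ V₁ :=
      mod_cast Submodule.finrank_lt fun h => hne ⟨hW₀, h⟩
    rw [hW₀, finrank_top]
    nlinarith

end FiniteDimensional

theorem classification_chamber_II_general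
    [FiniteDimensional ℂ V₀] [FiniteDimensional ℂ V₁]
    (θ₀ θ₁ : ℝ) (hθ₁ : 0 < θ₁) (hc : θ₀ + 2 * θ₁ < 0)
    (a₁ a₂ : V₀ →ₗ[ℂ] V₁) (b₁ b₂ : V₁ →ₗ[ℂ] V₀)
    (c : V₀ →ₗ[ℂ] V₀) (d : V₁ →ₗ[ℂ] V₁) (ι : ℂ →ₗ[ℂ] V₀)
    (hrel : SatisfiesRelations a₁ a₂ b₁ b₂ c d)
    (hι : Function.Bijective ι)
    (hd1 : finrank ℂ V₁ ≠ 1) :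
    IsFramedStable θ₀ θ₁ a₁ a₂ b₁ b₂ c d ι ↔
      (finrank ℂ V₁ = 0 ∨
        (finrank ℂ V₁ = 2 ∧ a₁ = 0 ∧ a₂ = 0 ∧
          LinearMap.ker b₁ ⊓ LinearMap.ker b₂ = ⊥)) := by
  obtain ⟨-, -, hr₁, hr₂, -, -, hcb₁, hcb₂⟩ := hrel
  have hV₀ : finrank ℂ V₀ = 1 := by
    rw [← (LinearEquiv.ofBijective ι hι).finrank_eq, finrank_self]
  constructor
  · intro hst
    have hK := hst.ker_inf_eq_bot hθ₁ hcb₁ hcb₂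
    have hle := finrank_le_two_mul_of_ker_inf_eq_bot hK
    rcases (by omega : finrank ℂ V₁ = 0 ∨ finrank ℂ V₁ = 2 * finrank ℂ V₀) with h0 | h2
    · exact Or.inl h0
    · exact Or.inr ⟨by omega, eq_zero_of_comp_comp_eq_of_ker_inf_eq_bot hK h2 hr₁,
        eq_zero_of_comp_comp_eq_of_ker_inf_eq_bot hK h2 hr₂, hK⟩
  · refine fun h => isFramedStable_of_ker_inf_eq_bot hθ₁ hc hι.2 hV₀ ?_
    rcases h with h0 | ⟨-, -, -, hK⟩
    · have := Module.finrank_zero_iff.mp h0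
      exact Subsingleton.elim _ _
    · exact hK

/-- Classification in chamber II: if `θ₀ < 0`, `θ₁ > 0`, `θ₀ + 2θ₁ < 0`,
`ι : ℂ → V₀` is an isomorphism and `dim V₁ ≠ 1`, then the framed representation is
`Θ`-stable iff either `V₁ = 0`, or `dim V₁ = 2` with `a₁ = a₂ = 0` and
`Ker(b₁) ∩ Ker(b₂) = 0`. -/
theorem classification_chamber_II
    [FiniteDimensional ℂ V₀] [FiniteDimensional ℂ V₁]
    (θ₀ θ₁ : ℝ) (hθ₀ : θ₀ < 0) (hθ₁ : 0 < θ₁) (hc : θ₀ + 2 * θ₁ < 0)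
    (a₁ a₂ : V₀ →ₗ[ℂ] V₁) (b₁ b₂ : V₁ →ₗ[ℂ] V₀)
    (c : V₀ →ₗ[ℂ] V₀) (d : V₁ →ₗ[ℂ] V₁) (ι : ℂ →ₗ[ℂ] V₀)
    (hrel : SatisfiesRelations a₁ a₂ b₁ b₂ c d)
    (hι : Function.Bijective ι)
    (hd1 : finrank ℂ V₁ ≠ 1) :
    IsFramedStable θ₀ θ₁ a₁ a₂ b₁ b₂ c d ι ↔
      (finrank ℂ V₁ = 0 ∨
        (finrank ℂ V₁ = 2 ∧ a₁ = 0 ∧ a₂ = 0 ∧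
          LinearMap.ker b₁ ⊓ LinearMap.ker b₂ = ⊥)) :=
  classification_chamber_II_general θ₀ θ₁ hθ₁ hc a₁ a₂ b₁ b₂ c d ι hrel hι hd1
end

section
/- (Classification in chamber III.) Suppose θ_0 < 0 and θ_1 < 0. Let Ṽ = (V_0, V_1, ℂ) be a framed representation of (Q̃,I) such that ι : ℂ → V_0 is an isomorphism and dim V_1 ≠ 1. Then Ṽ is Θ-stable if and only if either V_1 = 0, or dim V_1 = 2 and the map (a_1, a_2) : V_0 ⊕ V_0 → V_1 is bijective. -/
open Module

variable {V₀ V₁ : Type*} [AddCommGroup V₀] [Module ℂ V₀] [AddCommGroup V₁] [Module ℂ V₁]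

/-! Since `ι` is onto, `dim V₀ = 1` and every framed subrepresentation containing `ℂ` has
`W₀ = V₀`; the relations `d aᵢ = aᵢ c` make `(V₀, im a₁ + im a₂)` the smallest such one. With
`θ₁ < 0`, condition (ii) therefore says exactly that `(a₁, a₂) : V₀ ⊕ V₀ → V₁` is onto, while
condition (i) holds for every nonzero subrepresentation because both weights are negative.
A surjection from a 2-dimensional space onto a space of dimension `≠ 1` is either onto `0` or
an isomorphism. -/

lemma isSubrep_top_range_coprod {a₁ a₂ : V₀ →ₗ[ℂ] V₁} {c : V₀ →ₗ[ℂ] V₀} {d : V₁ →ₗ[ℂ] V₁}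
    (b₁ b₂ : V₁ →ₗ[ℂ] V₀) (h₁ : d ∘ₗ a₁ = a₁ ∘ₗ c) (h₂ : d ∘ₗ a₂ = a₂ ∘ₗ c) :
    IsSubrep a₁ a₂ b₁ b₂ c d ⊤ (LinearMap.range (a₁.coprod a₂)) := by
  refine ⟨fun x _ => ⟨(x, 0), by simp⟩, fun x _ => ⟨(0, x), by simp⟩,
    fun _ _ => trivial, fun _ _ => trivial, fun _ _ => trivial, ?_⟩
  rintro _ ⟨⟨x₁, x₂⟩, rfl⟩
  refine ⟨(c x₁, c x₂), ?_⟩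
  simp only [LinearMap.coprod_apply, map_add, ← LinearMap.comp_apply, h₁, h₂]

lemma IsSubrep.range_coprod_le {a₁ a₂ : V₀ →ₗ[ℂ] V₁} {b₁ b₂ : V₁ →ₗ[ℂ] V₀}
    {c : V₀ →ₗ[ℂ] V₀} {d : V₁ →ₗ[ℂ] V₁} {W₁ : Submodule ℂ V₁}
    (h : IsSubrep a₁ a₂ b₁ b₂ c d ⊤ W₁) : LinearMap.range (a₁.coprod a₂) ≤ W₁ := by
  rintro _ ⟨⟨x₁, x₂⟩, rfl⟩
  exact W₁.add_mem (h.1 x₁ trivial) (h.2.1 x₂ trivial)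

lemma theta_finrank_neg_of_ne_bot {θ₀ θ₁ : ℝ} (hθ₀ : θ₀ < 0) (hθ₁ : θ₁ < 0)
    {W₀ : Submodule ℂ V₀} {W₁ : Submodule ℂ V₁} [FiniteDimensional ℂ W₀]
    [FiniteDimensional ℂ W₁] (hne : ¬(W₀ = ⊥ ∧ W₁ = ⊥)) :
    θ₀ * (finrank ℂ W₀ : ℝ) + θ₁ * (finrank ℂ W₁ : ℝ) < 0 := by
  have hpos : 0 < finrank ℂ W₀ ∨ 0 < finrank ℂ W₁ := by
    simpa only [Nat.pos_iff_ne_zero, ne_eq, Submodule.finrank_eq_zero, ← not_and_or]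
  have h₀ : θ₀ * (finrank ℂ W₀ : ℝ) ≤ 0 := mul_nonpos_of_nonpos_of_nonneg hθ₀.le (by positivity)
  have h₁ : θ₁ * (finrank ℂ W₁ : ℝ) ≤ 0 := mul_nonpos_of_nonpos_of_nonneg hθ₁.le (by positivity)
  rcases hpos with hpos | hpos
  · have : θ₀ * (finrank ℂ W₀ : ℝ) < 0 := mul_neg_of_neg_of_pos hθ₀ (by exact_mod_cast hpos)
    linarith
  · have : θ₁ * (finrank ℂ W₁ : ℝ) < 0 := mul_neg_of_neg_of_pos hθ₁ (by exact_mod_cast hpos)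
    linarith

lemma isFramedStable_iff_range_coprod_eq_top [FiniteDimensional ℂ V₀] [FiniteDimensional ℂ V₁]
    {θ₀ θ₁ : ℝ} (hθ₀ : θ₀ < 0) (hθ₁ : θ₁ < 0) {a₁ a₂ : V₀ →ₗ[ℂ] V₁} (b₁ b₂ : V₁ →ₗ[ℂ] V₀)
    {c : V₀ →ₗ[ℂ] V₀} {d : V₁ →ₗ[ℂ] V₁} {ι : ℂ →ₗ[ℂ] V₀}
    (h₁ : d ∘ₗ a₁ = a₁ ∘ₗ c) (h₂ : d ∘ₗ a₂ = a₂ ∘ₗ c) (hι : LinearMap.range ι = ⊤) :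
    IsFramedStable θ₀ θ₁ a₁ a₂ b₁ b₂ c d ι ↔ LinearMap.range (a₁.coprod a₂) = ⊤ := by
  constructor
  · rintro ⟨-, hstable⟩
    by_contra hne
    have hlt := hstable ⊤ _ (isSubrep_top_range_coprod b₁ b₂ h₁ h₂) le_top
      (fun h => hne h.2)
    have hle : (finrank ℂ (LinearMap.range (a₁.coprod a₂)) : ℝ) ≤ finrank ℂ V₁ := by
      exact_mod_cast Submodule.finrank_le _
    rw [finrank_top] at hlt
    nlinarith
  · intro hrange
    refine ⟨fun _ _ _ hne => theta_finrank_neg_of_ne_bot hθ₀ hθ₁ hne, ?_⟩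
    intro W₀ W₁ hsub hιW₀ hne
    obtain rfl : W₀ = ⊤ := top_le_iff.mp (hι ▸ hιW₀)
    exact absurd ⟨rfl, top_le_iff.mp (hrange ▸ hsub.range_coprod_le)⟩ hne

lemma LinearMap.surjective_iff_of_finrank_eq_two {K E F : Type*} [Field K] [AddCommGroup E]
    [Module K E] [AddCommGroup F] [Module K F] [FiniteDimensional K E] [FiniteDimensional K F]
    (f : E →ₗ[K] F) (hE : finrank K E = 2) (hF : finrank K F ≠ 1) :
    Function.Surjective f ↔ finrank K F = 0 ∨ (finrank K F = 2 ∧ Function.Bijective f) := by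
  constructor
  · intro hf
    have hle : finrank K F ≤ 2 := by
      rw [← finrank_top K F, ← LinearMap.range_eq_top.mpr hf, ← hE]
      exact f.finrank_range_le
    obtain h0 | h2 : finrank K F = 0 ∨ finrank K F = 2 := by omega
    · exact Or.inl h0
    · exact Or.inr ⟨h2,
        (f.injective_iff_surjective_of_finrank_eq_finrank (hE.trans h2.symm)).mpr hf, hf⟩
  · rintro (h0 | ⟨-, hf⟩)
    · have : Subsingleton F := Module.finrank_zero_iff.mp h0
      exact fun y => ⟨0, Subsingleton.elim _ _⟩
    · exact hf.2

/-- Classification in chamber III: if `θ₀ < 0`, `θ₁ < 0`,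
`ι : ℂ → V₀` is an isomorphism and `dim V₁ ≠ 1`, then the framed representation is
`Θ`-stable iff either `V₁ = 0`, or `dim V₁ = 2` and `(a₁, a₂) : V₀ ⊕ V₀ → V₁` is
bijective. -/
theorem classification_chamber_III
    [FiniteDimensional ℂ V₀] [FiniteDimensional ℂ V₁]
    (θ₀ θ₁ : ℝ) (hθ₀ : θ₀ < 0) (hθ₁ : θ₁ < 0)
    (a₁ a₂ : V₀ →ₗ[ℂ] V₁) (b₁ b₂ : V₁ →ₗ[ℂ] V₀)
    (c : V₀ →ₗ[ℂ] V₀) (d : V₁ →ₗ[ℂ] V₁) (ι : ℂ →ₗ[ℂ] V₀)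
    (hrel : SatisfiesRelations a₁ a₂ b₁ b₂ c d)
    (hι : Function.Bijective ι)
    (hd1 : finrank ℂ V₁ ≠ 1) :
    IsFramedStable θ₀ θ₁ a₁ a₂ b₁ b₂ c d ι ↔
      (finrank ℂ V₁ = 0 ∨
        (finrank ℂ V₁ = 2 ∧ Function.Bijective ⇑(LinearMap.coprod a₁ a₂))) := by
  obtain ⟨-, -, -, -, h₁, h₂, -, -⟩ := hrel
  have hV₀ : finrank ℂ V₀ = 1 := by
    rw [← (LinearEquiv.ofBijective ι hι).finrank_eq, Module.finrank_self]
  rw [isFramedStable_iff_range_coprod_eq_top hθ₀ hθ₁ b₁ b₂ h₁ h₂ (LinearMap.range_eq_top.mpr hι.2),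
    LinearMap.range_eq_top]
  exact (a₁.coprod a₂).surjective_iff_of_finrank_eq_two (by rw [Module.finrank_prod, hV₀]) hd1
end
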